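/- arXiv:1512.00732 — 5 statements merged into one kernel-verified Lean document; each statement's English description precedes it below -/
import Mathlib

section
/- Let Ψ : M_d(ℂ) → M_d(ℂ) be a positive linear map such that (id + Ψ)^{d−1} is positivity improving. Then for every t > 0 the map exp(tΨ) is positivity improving. -/
/-!
Fix nonzero `φ, ψ` and put `qₙ = ⟨ψ, Ψⁿ(φφ*) ψ⟩`; positivity of `Ψ` gives `qₙ ≥ 0`. Expanding
`(id + Ψ)^(d-1)` binomially, its positivity improvement says `∑ₘ C(d-1, m) qₘ > 0`, so some
`q_k > 0`. Since `⟨ψ, exp(tΨ)(φφ*) ψ⟩ = ∑ₙ tⁿ/n! qₙ` is a series of nonnegative terms containing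
the positive term `tᵏ/k! q_k`, it is positive.
-/

open scoped ComplexOrder Matrix Matrix.Norms.L2Operator

noncomputable section

abbrev Mat (d : ℕ) := Matrix (Fin d) (Fin d) ℂ

/-- A quantum state: positive semidefinite with unit trace. -/
def IsState {d : ℕ} (ρ : Mat d) : Prop := ρ.PosSemidef ∧ ρ.trace = 1

/-- The Lindblad generator `L(X) = -i[H,X] + Σⱼ (Cⱼ X Cⱼ* - ½(Cⱼ*Cⱼ X + X Cⱼ*Cⱼ))`. -/
def lindblad {d m : ℕ} (H : Mat d) (C : Fin m → Mat d) : Mat d →ₗ[ℂ] Mat d :=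
  (-Complex.I) • (LinearMap.mulLeft ℂ H - LinearMap.mulRight ℂ H)
  + ∑ j, ((LinearMap.mulLeft ℂ (C j)).comp (LinearMap.mulRight ℂ (C j)ᴴ)
      - (1/2 : ℂ) • (LinearMap.mulLeft ℂ ((C j)ᴴ * C j) + LinearMap.mulRight ℂ ((C j)ᴴ * C j)))

/-- The exponential of a linear endomorphism of matrix space, computed through its
matrix representation in the standard basis. -/
def expMap {d : ℕ} (f : Mat d →ₗ[ℂ] Mat d) : Mat d →ₗ[ℂ] Mat d :=
  Matrix.toLin (Matrix.stdBasis ℂ (Fin d) (Fin d)) (Matrix.stdBasis ℂ (Fin d) (Fin d))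
    (NormedSpace.exp
      (LinearMap.toMatrix (Matrix.stdBasis ℂ (Fin d) (Fin d)) (Matrix.stdBasis ℂ (Fin d) (Fin d)) f))

/-- The restricted generator `L_S` acting on the `S` block. -/
def lindbladS {d m : ℕ} (H : Mat d) (C : Fin m → Mat d) (Ps : Mat d) : Mat d →ₗ[ℂ] Mat d :=
  lindblad (Ps * H * Ps) (fun j => Ps * C j * Ps)

/-- The reduced generator `L_R` on the `R` block, including the `-½{C_{j,P}* C_{j,P}, ·}` terms. -/
def lindbladR {d m : ℕ} (H : Mat d) (C : Fin m → Mat d) (Ps : Mat d) : Mat d →ₗ[ℂ] Mat d :=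
  lindblad ((1 - Ps) * H * (1 - Ps)) (fun j => (1 - Ps) * C j * (1 - Ps))
  - (1/2 : ℂ) • ∑ j, (LinearMap.mulLeft ℂ ((Ps * C j * (1 - Ps))ᴴ * (Ps * C j * (1 - Ps)))
       + LinearMap.mulRight ℂ ((Ps * C j * (1 - Ps))ᴴ * (Ps * C j * (1 - Ps))))

/-- The invariance block condition: `P_R Cⱼ P_S = 0` for all `j` and
`i P_S H P_R - ½ Σⱼ C_{j,S}* C_{j,P} = 0`. -/
def BlockInv {d m : ℕ} (H : Mat d) (C : Fin m → Mat d) (Ps : Mat d) : Prop :=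
  (∀ j, (1 - Ps) * C j * Ps = 0) ∧
    Complex.I • (Ps * H * (1 - Ps))
      - (1/2 : ℂ) • ∑ j, (Ps * C j * Ps)ᴴ * (Ps * C j * (1 - Ps)) = 0

/-- `H_S` (the range of `Ps`) is invariant in mean. -/
def InvariantMean {d m : ℕ} (H : Mat d) (C : Fin m → Mat d) (Ps : Mat d) : Prop :=
  ∀ ρ₀ : Mat d, IsState ρ₀ → (Ps * ρ₀).trace = 1 →
    ∀ t : ℝ, 0 ≤ t → (Ps * expMap ((t : ℂ) • lindblad H C) ρ₀).trace = 1

/-- `H_S` (the range of `Ps`) is globally asymptotically stable in mean: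
`‖exp(tL)(ρ₀) - P_S exp(tL)(ρ₀) P_S‖ → 0` as `t → ∞`, for every state `ρ₀`. -/
def GASMean {d m : ℕ} (H : Mat d) (C : Fin m → Mat d) (Ps : Mat d) : Prop :=
  ∀ ρ₀ : Mat d, IsState ρ₀ →
    Filter.Tendsto
      (fun t : ℝ =>
        ‖expMap ((t : ℂ) • lindblad H C) ρ₀ - Ps * expMap ((t : ℂ) • lindblad H C) ρ₀ * Ps‖)
      Filter.atTop (nhds 0)

/-- `α₀`: the minimum of `-Re λ` over the eigenvalues `λ` of the restriction of `L_R` to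
`V_R = {X : X = P_R X P_R}`. -/
def alpha0 {d m : ℕ} (H : Mat d) (C : Fin m → Mat d) (Ps : Mat d) : ℝ :=
  sInf {x : ℝ | ∃ (lam : ℂ) (X : Mat d), X ≠ 0 ∧ (1 - Ps) * X * (1 - Ps) = X ∧
    lindbladR H C Ps X = lam • X ∧ x = -lam.re}

/-- A linear map on matrices is positivity improving if `⟨ψ, Φ(φφ*) ψ⟩ > 0` (a strictly
positive real number) for all nonzero vectors `φ, ψ`. -/
def PosImproving {d : ℕ} (Φ : Mat d →ₗ[ℂ] Mat d) : Prop :=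
  ∀ φ ψ : Fin d → ℂ, φ ≠ 0 → ψ ≠ 0 →
    0 < star ψ ⬝ᵥ ((Φ (Matrix.vecMulVec φ (star φ))) *ᵥ ψ)

/-- `r_j(ρ) = tr[(C_j + C_j*) ρ]` (a real number). -/
def rVal {d m : ℕ} (C : Fin m → Mat d) (j : Fin m) (ρ : Mat d) : ℝ :=
  (((C j + (C j)ᴴ) * ρ).trace).re

/-- `v_j(ρ) = tr[C_j ρ C_j*]` (a real number). -/
def vVal {d m : ℕ} (C : Fin m → Mat d) (j : Fin m) (ρ : Mat d) : ℝ :=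
  ((C j * ρ * (C j)ᴴ).trace).re

/-- `r_{j,S}(ρ_S) = tr[(C_{j,S} + C_{j,S}*) ρ_S]`. -/
def rValS {d m : ℕ} (C : Fin m → Mat d) (Ps : Mat d) (j : Fin m) (ρS : Mat d) : ℝ :=
  (((Ps * C j * Ps + (Ps * C j * Ps)ᴴ) * ρS).trace).re

/-- `r_{j,R}(ρ_R) = tr[(C_{j,R} + C_{j,R}*) ρ_R]`. -/
def rValR {d m : ℕ} (C : Fin m → Mat d) (Ps : Mat d) (j : Fin m) (ρR : Mat d) : ℝ :=
  ((((1 - Ps) * C j * (1 - Ps) + ((1 - Ps) * C j * (1 - Ps))ᴴ) * ρR).trace).re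

/-- `v_{j,S}(ρ_S) = tr[C_{j,S}* C_{j,S} ρ_S]`. -/
def vValS {d m : ℕ} (C : Fin m → Mat d) (Ps : Mat d) (j : Fin m) (ρS : Mat d) : ℝ :=
  ((((Ps * C j * Ps)ᴴ * (Ps * C j * Ps)) * ρS).trace).re

/-- `v_{j,R}(ρ_R) = tr[C_{j,R}* C_{j,R} ρ_R]`. -/
def vValR {d m : ℕ} (C : Fin m → Mat d) (Ps : Mat d) (j : Fin m) (ρR : Mat d) : ℝ :=
  (((((1 - Ps) * C j * (1 - Ps))ᴴ * ((1 - Ps) * C j * (1 - Ps))) * ρR).trace).re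

/-- The function `α(ρ, ρ_R)`; indices `j < p` are diffusive, indices `p ≤ j` are jump indices.
The convention `0 · ln 0 = 0` is automatic since `Real.log 0 = 0` in Lean. -/
def alphaFun {d m : ℕ} (C : Fin m → Mat d) (p : ℕ) (Ps : Mat d) (ρ ρR : Mat d) : ℝ :=
  (1/2) * ∑ j ∈ Finset.filter (fun j : Fin m => (j : ℕ) < p) Finset.univ,
      (rVal C j ρ - rValR C Ps j ρR) ^ 2
  + ∑ j ∈ Finset.filter (fun j : Fin m => p ≤ (j : ℕ)) Finset.univ,
      (vValR C Ps j ρR - vVal C j ρ + vVal C j ρ * Real.log (vVal C j ρ / vValR C Ps j ρR))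

/-- `α₁`: the infimum of `α(ρ, ρ_R)` over states `ρ` with `tr(P_S ρ) = 1` and states `ρ_R`
supported on `H_R`. -/
def alpha1 {d m : ℕ} (C : Fin m → Mat d) (p : ℕ) (Ps : Mat d) : ℝ :=
  sInf {a : ℝ | ∃ ρ ρR : Mat d, IsState ρ ∧ (Ps * ρ).trace = 1 ∧ IsState ρR ∧
    (1 - Ps) * ρR * (1 - Ps) = ρR ∧ a = alphaFun C p Ps ρ ρR}

/-- Assumption (SP): `⟨x, C_{j,R}* C_{j,R} x⟩ > 0` for every jump index `j` and every nonzero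
`x` in the range of `P_R`. -/
def AssumpSP {d m : ℕ} (C : Fin m → Mat d) (p : ℕ) (Ps : Mat d) : Prop :=
  ∀ j : Fin m, p ≤ (j : ℕ) → ∀ x : Fin d → ℂ, x ≠ 0 → (1 - Ps) *ᵥ x = x →
    0 < star x ⬝ᵥ (((((1 - Ps) * C j * (1 - Ps))ᴴ * ((1 - Ps) * C j * (1 - Ps)))) *ᵥ x)

/-- Assumption (ND): every state supported on `H_S` and every state supported on `H_R`
are distinguished by some measurement record expectation. -/
def AssumpND {d m : ℕ} (C : Fin m → Mat d) (p : ℕ) (Ps : Mat d) : Prop :=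
  ∀ ρS ρR : Mat d, IsState ρS → Ps * ρS * Ps = ρS → IsState ρR → (1 - Ps) * ρR * (1 - Ps) = ρR →
    ∃ j : Fin m, ((j : ℕ) < p ∧ rValS C Ps j ρS ≠ rValR C Ps j ρR) ∨
                 (p ≤ (j : ℕ) ∧ vValS C Ps j ρS ≠ vValR C Ps j ρR)

theorem exists_pos_apply_pow_of_pos_apply_one_add_pow {A B F : Type*} [Semiring A]
    [AddCommMonoid B] [PartialOrder B] [IsOrderedAddMonoid B] [FunLike F A B]
    [AddMonoidHomClass F A B] (L : F) {a : A} (hL : ∀ m, 0 ≤ L (a ^ m)) {n : ℕ}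
    (hpos : 0 < L ((1 + a) ^ n)) : ∃ k, 0 < L (a ^ k) := by
  by_contra! hzero
  have hL0 : ∀ m, L (a ^ m) = 0 := fun m => ((hL m).lt_or_eq.resolve_left (hzero m)).symm
  rw [add_comm, (Commute.one_right a).add_pow', map_sum] at hpos
  simp only [one_pow, mul_one, map_nsmul, hL0, smul_zero, Finset.sum_const_zero, lt_irrefl] at hpos

theorem Module.End.pow_apply_posSemidef {n : Type*} [Fintype n] {Ψ : Module.End ℂ (Matrix n n ℂ)}
    (hΨ : ∀ X : Matrix n n ℂ, X.PosSemidef → (Ψ X).PosSemidef) (k : ℕ) {X : Matrix n n ℂ}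
    (hX : X.PosSemidef) : ((Ψ ^ k) X).PosSemidef := by
  induction k generalizing X with
  | zero => simpa using hX
  | succ k ih => simpa [pow_succ] using ih (hΨ X hX)

theorem hasSum_apply_expMap {d : ℕ} (f : Mat d →ₗ[ℂ] Mat d) (L : (Mat d →ₗ[ℂ] Mat d) →ₗ[ℂ] ℂ) :
    HasSum (fun n => (n.factorial : ℂ)⁻¹ • L (f ^ n)) (L (expMap f)) := by
  set b := Matrix.stdBasis ℂ (Fin d) (Fin d)
  have hL : Continuous (L ∘ₗ (Matrix.toLin b b).toLinearMap) :=
    LinearMap.continuous_of_finiteDimensional _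
  have := (NormedSpace.exp_series_hasSum_exp' (𝕂 := ℂ) (LinearMap.toMatrix b b f)).mapL
    (L ∘ₗ (Matrix.toLin b b).toLinearMap).toContinuousLinearMap
  simp only [Matrix.toLin_pow, map_smul, LinearMap.coe_toContinuousLinearMap',
    LinearMap.coe_comp, LinearEquiv.coe_coe, Function.comp_apply, Matrix.toLin_toMatrix] at this
  exact this

theorem stmt6_general {d : ℕ} (Ψ : Mat d →ₗ[ℂ] Mat d)
    (hΨpos : ∀ X : Mat d, X.PosSemidef → (Ψ X).PosSemidef)
    (hΨimp : PosImproving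
      (((LinearMap.id + Ψ : Module.End ℂ (Mat d)) ^ (d - 1) : Mat d →ₗ[ℂ] Mat d))) :
    ∀ t : ℝ, 0 < t → PosImproving (expMap ((t : ℂ) • Ψ)) := by
  intro t ht φ ψ hφ hψ
  set X := Matrix.vecMulVec φ (star φ)
  let L : Module.End ℂ (Mat d) →ₗ[ℂ] ℂ :=
    { toFun := fun Φ => star ψ ⬝ᵥ (Φ X *ᵥ ψ)
      map_add' := fun Φ Φ' => by simp [Matrix.add_mulVec, dotProduct_add]
      map_smul' := fun c Φ => by simp [Matrix.smul_mulVec, dotProduct_smul] }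
  have hL : ∀ m, 0 ≤ L (Ψ ^ m) := fun m =>
    (Module.End.pow_apply_posSemidef hΨpos m
      (Matrix.posSemidef_vecMulVec_self_star φ)).dotProduct_mulVec_nonneg ψ
  obtain ⟨k, hk⟩ := exists_pos_apply_pow_of_pos_apply_one_add_pow L hL (hΨimp φ ψ hφ hψ)
  have hterm : ∀ n, (n.factorial : ℂ)⁻¹ • L (((t : ℂ) • Ψ) ^ n)
      = ((t ^ n / n.factorial : ℝ) : ℂ) * L (Ψ ^ n) := by
    intro n
    rw [smul_pow, map_smul, smul_eq_mul, smul_eq_mul]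
    push_cast
    ring
  refine hasSum_lt (f := 0) (i := k) (fun n => ?_) ?_ hasSum_zero (hasSum_apply_expMap _ L)
  · rw [hterm]
    exact mul_nonneg (Complex.zero_le_real.mpr (by positivity)) (hL n)
  · rw [hterm]
    exact mul_pos (Complex.zero_lt_real.mpr (by positivity)) hk

/-- If `Ψ` is a positive map with `(id + Ψ)^(d-1)` positivity improving, then
`exp(tΨ)` is positivity improving for every `t > 0`. -/
theorem stmt6 {d : ℕ} (hd : 1 ≤ d) (Ψ : Mat d →ₗ[ℂ] Mat d)
    (hΨpos : ∀ X : Mat d, X.PosSemidef → (Ψ X).PosSemidef)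
    (hΨimp : PosImproving
      (((LinearMap.id + Ψ : Module.End ℂ (Mat d)) ^ (d - 1) : Mat d →ₗ[ℂ] Mat d))) :
    ∀ t : ℝ, 0 < t → PosImproving (expMap ((t : ℂ) • Ψ)) :=
  stmt6_general Ψ hΨpos hΨimp

end
end

section
/- For every t ≥ 0 the map exp(tL_S) maps positive semidefinite matrices to positive semidefinite matrices and preserves the trace: tr(exp(tL_S)(X)) = tr(X) for every X ∈ M_d(ℂ). -/
open scoped ComplexOrder Matrix Matrix.Norms.L2Operator

noncomputable section

/-!
Write `L_S = lindblad H' C'` with `H' = P_S H P_S` self-adjoint and `C'ⱼ = P_S Cⱼ P_S`. Every term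
of a Lindblad generator is traceless, so only the zeroth term of the exponential series of
`exp(tL_S)` contributes to the trace. For positivity, split `L_S = K + Φ` with `K X = G X + X Gᴴ`,
`G = -iH' - ½ Σⱼ C'ⱼᴴ C'ⱼ`, and `Φ X = Σⱼ C'ⱼ X C'ⱼᴴ`. Then `exp(sK) X = e^{sG} X (e^{sG})ᴴ`, and
`exp(sΦ)` is a series of positive maps with nonnegative coefficients, so both are positive for
`s ≥ 0`. The Lie product formula `exp(t(K + Φ)) = lim (exp(tK/n) exp(tΦ/n))ⁿ`, applied to the
matrices of these maps, and the closedness of the cone of positive semidefinite matrices carry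
positivity over to `exp(tL_S)`.
-/

open NormedSpace Filter Topology
open scoped Nat

section LieProductFormula

variable {𝔸 : Type*} [NormedRing 𝔸] [NormOneClass 𝔸]

lemma norm_pow_sub_pow_le (s t : 𝔸) {M : ℝ} (hs : ‖s‖ ≤ M) (ht : ‖t‖ ≤ M) (n : ℕ) :
    ‖s ^ n - t ^ n‖ ≤ n * M ^ (n - 1) * ‖s - t‖ := by
  induction n with
  | zero => simp
  | succ n ih =>
    have hM : 0 ≤ M := (norm_nonneg s).trans hs
    have hsplit : s ^ (n + 1) - t ^ (n + 1) = s * (s ^ n - t ^ n) + (s - t) * t ^ n := by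
      rw [pow_succ', pow_succ']
      noncomm_ring
    have htn : ‖t ^ n‖ ≤ M ^ n := (norm_pow_le t n).trans (pow_le_pow_left₀ (norm_nonneg t) ht n)
    rw [Nat.add_sub_cancel]
    calc ‖s ^ (n + 1) - t ^ (n + 1)‖
        ≤ ‖s‖ * ‖s ^ n - t ^ n‖ + ‖s - t‖ * ‖t ^ n‖ := by
          rw [hsplit]
          exact (norm_add_le _ _).trans (add_le_add (norm_mul_le _ _) (norm_mul_le _ _))
      _ ≤ M * (n * M ^ (n - 1) * ‖s - t‖) + ‖s - t‖ * M ^ n := by gcongr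
      _ = (n + 1 : ℕ) * M ^ n * ‖s - t‖ := by
          rcases n with _ | n
          · simp
          · push_cast
            ring

variable [NormedAlgebra ℝ 𝔸]

lemma norm_exp_le (x : 𝔸) : ‖exp x‖ ≤ Real.exp ‖x‖ := by
  rw [exp_eq_tsum ℝ, Real.exp_eq_exp_ℝ, exp_eq_tsum ℝ]
  refine (norm_tsum_le_tsum_norm (norm_expSeries_summable' x)).trans <|
    (norm_expSeries_summable' x).tsum_le_tsum (fun n => ?_) (expSeries_summable' ‖x‖)
  rw [norm_smul, Real.norm_of_nonneg (by positivity), smul_eq_mul]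
  gcongr
  exact norm_pow_le x n

variable [CompleteSpace 𝔸]

lemma norm_exp_sub_one_sub_le (x : 𝔸) : ‖exp x - 1 - x‖ ≤ ‖x‖ ^ 2 * Real.exp ‖x‖ := by
  have hs := expSeries_summable' (𝕂 := ℝ) x
  have hs₁ := (summable_nat_add_iff 1).mpr hs
  have htail : exp x - 1 - x = ∑' n : ℕ, ((n + 2)!⁻¹ : ℝ) • x ^ (n + 2) := by
    simp only [exp_eq_tsum ℝ]
    rw [hs.tsum_eq_zero_add, hs₁.tsum_eq_zero_add]
    simp
  have hterm (n : ℕ) :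
      ‖((n + 2)!⁻¹ : ℝ) • x ^ (n + 2)‖ ≤ ‖x‖ ^ 2 * ((n !⁻¹ : ℝ) • ‖x‖ ^ n) := by
    rw [norm_smul, Real.norm_of_nonneg (by positivity), smul_eq_mul]
    calc ((n + 2)!⁻¹ : ℝ) * ‖x ^ (n + 2)‖ ≤ (n !⁻¹ : ℝ) * ‖x‖ ^ (n + 2) := by
          gcongr
          · omega
          · exact norm_pow_le x _
      _ = ‖x‖ ^ 2 * ((n !⁻¹ : ℝ) * ‖x‖ ^ n) := by ring
  have hnorm := (summable_nat_add_iff 2).mpr (norm_expSeries_summable' (𝕂 := ℝ) x)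
  rw [htail, Real.exp_eq_exp_ℝ, exp_eq_tsum ℝ, ← tsum_mul_left]
  exact (norm_tsum_le_tsum_norm hnorm).trans <|
    hnorm.tsum_le_tsum hterm ((expSeries_summable' ‖x‖).mul_left _)

lemma norm_exp_mul_exp_sub_exp_add_le (a b : 𝔸) :
    ‖exp a * exp b - exp (a + b)‖ ≤ 4 * (‖a‖ + ‖b‖) ^ 2 * Real.exp (2 * (‖a‖ + ‖b‖)) := by
  have ha : ‖a‖ ≤ ‖a‖ + ‖b‖ := le_add_of_nonneg_right (norm_nonneg b)
  have hb : ‖b‖ ≤ ‖a‖ + ‖b‖ := le_add_of_nonneg_left (norm_nonneg a)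
  have hab : ‖a + b‖ ≤ ‖a‖ + ‖b‖ := norm_add_le a b
  have hr₀ : 0 ≤ ‖a‖ + ‖b‖ := by positivity
  generalize ‖a‖ + ‖b‖ = r at ha hb hab hr₀ ⊢
  have hrem {x : 𝔸} (hx : ‖x‖ ≤ r) : ‖exp x - 1 - x‖ ≤ r ^ 2 * Real.exp r :=
    (norm_exp_sub_one_sub_le x).trans (by gcongr)
  have hexpb : ‖exp b‖ ≤ Real.exp r := (norm_exp_le b).trans (by gcongr)
  have hone_add : ‖1 + a‖ ≤ Real.exp r :=
    (norm_add_le _ _).trans (by rw [norm_one]; linarith [Real.add_one_le_exp r])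
  have hmul : ‖a * b‖ ≤ r ^ 2 :=
    (norm_mul_le a b).trans (by nlinarith [norm_nonneg a, norm_nonneg b])
  have h1 : 1 ≤ Real.exp r := Real.one_le_exp hr₀
  have hsplit : exp a * exp b - exp (a + b) =
      (exp a - 1 - a) * exp b + (1 + a) * (exp b - 1 - b) + a * b
        - (exp (a + b) - 1 - (a + b)) := by
    noncomm_ring
  calc ‖exp a * exp b - exp (a + b)‖
      ≤ ‖exp a - 1 - a‖ * ‖exp b‖ + ‖1 + a‖ * ‖exp b - 1 - b‖ + ‖a * b‖
          + ‖exp (a + b) - 1 - (a + b)‖ := by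
        rw [hsplit]
        refine (norm_sub_le _ _).trans (add_le_add_left ?_ _)
        refine (norm_add_le _ _).trans (add_le_add_left ?_ _)
        exact (norm_add_le _ _).trans (add_le_add (norm_mul_le _ _) (norm_mul_le _ _))
    _ ≤ r ^ 2 * Real.exp r * Real.exp r + Real.exp r * (r ^ 2 * Real.exp r) + r ^ 2
          + r ^ 2 * Real.exp r := by
        gcongr
        exacts [hrem ha, hrem hb, hrem hab]
    _ ≤ 4 * r ^ 2 * Real.exp (2 * r) := by
        rw [two_mul, Real.exp_add]
        have hr2 : 0 ≤ r ^ 2 := sq_nonneg r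
        have he : 1 ≤ Real.exp r * Real.exp r := one_le_mul_of_one_le_of_one_le h1 h1
        nlinarith [mul_le_mul_of_nonneg_left he hr2, mul_le_mul_of_nonneg_left h1 hr2,
          mul_le_mul_of_nonneg_left (le_mul_of_one_le_left (by positivity) h1) hr2]

theorem tendsto_exp_mul_exp_pow (A B : 𝔸) :
    Tendsto (fun n : ℕ => (exp ((n : ℝ)⁻¹ • A) * exp ((n : ℝ)⁻¹ • B)) ^ n) atTop
      (𝓝 (exp (A + B))) := by
  obtain ⟨R, hR⟩ : ∃ R, ‖A‖ + ‖B‖ = R := ⟨_, rfl⟩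
  -- one step is off by `O(1/n²)` and telescoping the `n`-th powers multiplies that by `n`
  have hbound (n : ℕ) (hn : 1 ≤ n) :
      ‖(exp ((n : ℝ)⁻¹ • A) * exp ((n : ℝ)⁻¹ • B)) ^ n - exp (A + B)‖ ≤
        4 * R ^ 2 * Real.exp (3 * R) / n := by
    have hn₀ : (0 : ℝ) < n := by exact_mod_cast hn
    set a := (n : ℝ)⁻¹ • A
    set b := (n : ℝ)⁻¹ • B
    have hr : ‖a‖ + ‖b‖ = R / n := by
      simp only [a, b, norm_smul, norm_inv, Real.norm_natCast, ← hR]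
      ring
    have hpow : exp (a + b) ^ n = exp (A + B) := by
      let _ : NormedAlgebra ℚ 𝔸 := NormedAlgebra.restrictScalars ℚ ℝ 𝔸
      rw [← exp_nsmul, ← smul_add, ← Nat.cast_smul_eq_nsmul ℝ, smul_smul,
        mul_inv_cancel₀ hn₀.ne', one_smul]
    have hprod : ‖exp a * exp b‖ ≤ Real.exp (R / n) := by
      rw [← hr, Real.exp_add]
      exact (norm_mul_le _ _).trans (mul_le_mul (norm_exp_le a) (norm_exp_le b) (norm_nonneg _)
        (Real.exp_pos _).le)
    have hsum : ‖exp (a + b)‖ ≤ Real.exp (R / n) :=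
      (norm_exp_le _).trans (Real.exp_le_exp.mpr (hr ▸ norm_add_le a b))
    have hR₀ : 0 ≤ R := hR ▸ by positivity
    have hRn : R / n ≤ R := div_le_self hR₀ (by exact_mod_cast hn)
    have hexp_pow : Real.exp (R / n) ^ (n - 1) ≤ Real.exp R := by
      rw [← Real.exp_nat_mul]
      gcongr
      calc ((n - 1 : ℕ) : ℝ) * (R / n) ≤ n * (R / n) := by gcongr; exact_mod_cast Nat.sub_le n 1
        _ = R := by field_simp
    calc ‖(exp a * exp b) ^ n - exp (A + B)‖
        ≤ n * Real.exp (R / n) ^ (n - 1) * ‖exp a * exp b - exp (a + b)‖ :=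
          hpow ▸ norm_pow_sub_pow_le _ _ hprod hsum n
      _ ≤ n * Real.exp R * (4 * (R / n) ^ 2 * Real.exp (2 * R)) := by
          gcongr
          refine (norm_exp_mul_exp_sub_exp_add_le a b).trans ?_
          rw [hr]
          gcongr
      _ = 4 * R ^ 2 * Real.exp (3 * R) / n := by
          rw [show 3 * R = R + 2 * R by ring, Real.exp_add]
          field_simp
  rw [tendsto_iff_norm_sub_tendsto_zero]
  exact squeeze_zero' (Eventually.of_forall fun n => norm_nonneg _)
    (eventually_atTop.mpr ⟨1, hbound⟩) (tendsto_const_div_atTop_nhds_zero_nat _)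

end LieProductFormula

lemma map_exp_of_map_pow {𝕂 𝔸 𝔹 : Type*} [RCLike 𝕂] [NormedRing 𝔸] [NormedAlgebra 𝕂 𝔸]
    [CompleteSpace 𝔸] [NormedRing 𝔹] [NormedAlgebra 𝕂 𝔹] [CompleteSpace 𝔹]
    (ψ : 𝔸 →L[𝕂] 𝔹) (x : 𝔸) (hψ : ∀ n, ψ (x ^ n) = ψ x ^ n) : ψ (exp x) = exp (ψ x) := by
  have h := (exp_series_hasSum_exp' (𝕂 := 𝕂) x).mapL ψ
  simp only [map_smul, hψ] at h
  exact h.unique (exp_series_hasSum_exp' (ψ x))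

variable {d : ℕ}

abbrev endToMatrix (d : ℕ) :
    (Mat d →ₗ[ℂ] Mat d) ≃ₐ[ℂ] Matrix (Fin d × Fin d) (Fin d × Fin d) ℂ :=
  LinearMap.toMatrixAlgEquiv (Matrix.stdBasis ℂ (Fin d) (Fin d))

lemma expMap_eq (f : Mat d →ₗ[ℂ] Mat d) :
    expMap f = (endToMatrix d).symm (exp (endToMatrix d f)) := rfl

def toLinEval (X : Mat d) : Matrix (Fin d × Fin d) (Fin d × Fin d) ℂ →L[ℂ] Mat d :=
  LinearMap.toContinuousLinearMap ((LinearMap.applyₗ X).comp (endToMatrix d).symm.toLinearMap)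

lemma toLinEval_apply (X : Mat d) (M : Matrix (Fin d × Fin d) (Fin d × Fin d) ℂ) :
    toLinEval X M = (endToMatrix d).symm M X := rfl

lemma hasSum_expMap_apply (f : Mat d →ₗ[ℂ] Mat d) (X : Mat d) :
    HasSum (fun n : ℕ => (n !⁻¹ : ℂ) • (f ^ n) X) (expMap f X) := by
  have h := (exp_series_hasSum_exp' (𝕂 := ℂ) (endToMatrix d f)).mapL (toLinEval X)
  simp only [map_smul, map_pow, toLinEval_apply, AlgEquiv.symm_apply_apply] at h
  exact h

lemma trace_expMap_apply {f : Mat d →ₗ[ℂ] Mat d} (hf : ∀ Y, (f Y).trace = 0) (X : Mat d) :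
    (expMap f X).trace = X.trace := by
  have h := (hasSum_expMap_apply f X).mapL
    (Matrix.traceLinearMap (Fin d) ℂ ℂ).toContinuousLinearMap
  refine h.unique ((hasSum_ite_eq 0 X.trace).congr_fun fun n => ?_)
  cases n with
  | zero => simp
  | succ n => simp [pow_succ', hf]

lemma exp_endToMatrix_mulLeft (A : Mat d) :
    exp (endToMatrix d (LinearMap.mulLeft ℂ A)) = endToMatrix d (LinearMap.mulLeft ℂ (exp A)) :=
  (map_exp_of_map_pow
    ((endToMatrix d).toLinearMap.comp (LinearMap.mul ℂ (Mat d))).toContinuousLinearMap A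
    fun n => by
      change endToMatrix d (LinearMap.mulLeft ℂ (A ^ n)) =
        endToMatrix d (LinearMap.mulLeft ℂ A) ^ n
      rw [← map_pow, LinearMap.pow_mulLeft]).symm

lemma exp_endToMatrix_mulRight (A : Mat d) :
    exp (endToMatrix d (LinearMap.mulRight ℂ A)) = endToMatrix d (LinearMap.mulRight ℂ (exp A)) :=
  (map_exp_of_map_pow
    ((endToMatrix d).toLinearMap.comp (LinearMap.mul ℂ (Mat d)).flip).toContinuousLinearMap A
    fun n => by
      change endToMatrix d (LinearMap.mulRight ℂ (A ^ n)) =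
        endToMatrix d (LinearMap.mulRight ℂ A) ^ n
      rw [← map_pow, LinearMap.pow_mulRight]).symm

lemma expMap_mulLeft_add_mulRight_apply (A B X : Mat d) :
    expMap (LinearMap.mulLeft ℂ A + LinearMap.mulRight ℂ B) X = exp A * X * exp B := by
  rw [expMap_eq, map_add,
    Matrix.exp_add_of_commute _ _ ((LinearMap.commute_mulLeft_right A B).map _),
    exp_endToMatrix_mulLeft, exp_endToMatrix_mulRight, ← map_mul, AlgEquiv.symm_apply_apply,
    Module.End.mul_apply, LinearMap.mulLeft_apply, LinearMap.mulRight_apply, mul_assoc]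

lemma isClosed_setOf_posSemidef : IsClosed {A : Mat d | A.PosSemidef} := by
  open scoped MatrixOrder in
  simpa only [Matrix.nonneg_iff_posSemidef] using CStarAlgebra.isClosed_nonneg (A := Mat d)

def IsPositiveMap (f : Mat d →ₗ[ℂ] Mat d) : Prop :=
  ∀ X : Mat d, X.PosSemidef → (f X).PosSemidef

namespace IsPositiveMap

lemma mul {f g : Mat d →ₗ[ℂ] Mat d} (hf : IsPositiveMap f) (hg : IsPositiveMap g) :
    IsPositiveMap (f * g) :=
  fun X hX => hf _ (hg X hX)

lemma pow {f : Mat d →ₗ[ℂ] Mat d} (hf : IsPositiveMap f) (n : ℕ) : IsPositiveMap (f ^ n) := by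
  induction n with
  | zero => exact fun X hX => hX
  | succ n ih => exact pow_succ f n ▸ ih.mul hf

lemma expMap_smul {f : Mat d →ₗ[ℂ] Mat d} (hf : IsPositiveMap f) {s : ℝ} (hs : 0 ≤ s) :
    IsPositiveMap (expMap ((s : ℂ) • f)) := by
  intro X hX
  refine isClosed_setOf_posSemidef.mem_of_tendsto (hasSum_expMap_apply _ X).tendsto_sum_nat
    (Eventually.of_forall fun N => Matrix.posSemidef_sum _ fun n _ => ?_)
  rw [smul_pow, LinearMap.smul_apply, smul_smul]
  refine (hf.pow n X hX).smul ?_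
  rw [← Complex.ofReal_natCast, ← Complex.ofReal_inv, ← Complex.ofReal_pow, ← Complex.ofReal_mul]
  exact Complex.zero_le_real.mpr (by positivity)

end IsPositiveMap

lemma isClosed_setOf_isPositiveMap : IsClosed
    {M : Matrix (Fin d × Fin d) (Fin d × Fin d) ℂ | IsPositiveMap ((endToMatrix d).symm M)} := by
  simp only [IsPositiveMap, Set.ofPred_forall]
  exact isClosed_iInter fun X => isClosed_iInter fun _ =>
    isClosed_setOf_posSemidef.preimage (toLinEval X).continuous

theorem IsPositiveMap.expMap_smul_add [Nonempty (Fin d)] {f g : Mat d →ₗ[ℂ] Mat d}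
    (hf : ∀ s : ℝ, 0 ≤ s → IsPositiveMap (expMap ((s : ℂ) • f)))
    (hg : ∀ s : ℝ, 0 ≤ s → IsPositiveMap (expMap ((s : ℂ) • g))) {t : ℝ} (ht : 0 ≤ t) :
    IsPositiveMap (expMap ((t : ℂ) • (f + g))) := by
  have hsmul (h : Mat d →ₗ[ℂ] Mat d) (n : ℕ) :
      (n : ℝ)⁻¹ • endToMatrix d ((t : ℂ) • h) = endToMatrix d (((t / n : ℝ) : ℂ) • h) := by
    rw [← Complex.coe_smul, ← map_smul, smul_smul]
    push_cast
    ring_nf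
  have hlim := tendsto_exp_mul_exp_pow (endToMatrix d ((t : ℂ) • f)) (endToMatrix d ((t : ℂ) • g))
  rw [← map_add, ← smul_add] at hlim
  refine isClosed_setOf_isPositiveMap.mem_of_tendsto hlim (Eventually.of_forall fun n => ?_)
  simp only [Set.mem_ofPred_eq, hsmul, map_pow, map_mul]
  exact ((hf _ (by positivity)).mul (hg _ (by positivity))).pow n

def lyapunovMap (G : Mat d) : Mat d →ₗ[ℂ] Mat d :=
  LinearMap.mulLeft ℂ G + LinearMap.mulRight ℂ Gᴴ

lemma ofReal_smul_lyapunovMap (s : ℝ) (G : Mat d) :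
    (s : ℂ) • lyapunovMap G = lyapunovMap ((s : ℂ) • G) := by
  ext1 X
  simp [lyapunovMap, Matrix.conjTranspose_smul]

lemma isPositiveMap_expMap_lyapunovMap (G : Mat d) : IsPositiveMap (expMap (lyapunovMap G)) := by
  intro X hX
  rw [lyapunovMap, expMap_mulLeft_add_mulRight_apply, Matrix.exp_conjTranspose]
  exact hX.mul_mul_conjTranspose_same _

def lindbladDrift {m : ℕ} (H : Mat d) (C : Fin m → Mat d) : Mat d :=
  -Complex.I • H - (1 / 2 : ℂ) • ∑ j, (C j)ᴴ * C j

def lindbladJump {m : ℕ} (C : Fin m → Mat d) : Mat d →ₗ[ℂ] Mat d :=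
  ∑ j, (LinearMap.mulLeft ℂ (C j)).comp (LinearMap.mulRight ℂ (C j)ᴴ)

lemma isPositiveMap_lindbladJump {m : ℕ} (C : Fin m → Mat d) : IsPositiveMap (lindbladJump C) := by
  intro X hX
  simp only [lindbladJump, LinearMap.coe_sum, Finset.sum_apply, LinearMap.comp_apply,
    LinearMap.mulLeft_apply, LinearMap.mulRight_apply, ← mul_assoc]
  exact Matrix.posSemidef_sum _ fun j _ => hX.mul_mul_conjTranspose_same (C j)

lemma lindblad_eq_lyapunovMap_add {m : ℕ} {H : Mat d} (hH : Hᴴ = H) (C : Fin m → Mat d) :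
    lindblad H C = lyapunovMap (lindbladDrift H C) + lindbladJump C := by
  have hsum : (∑ j, (C j)ᴴ * C j)ᴴ = ∑ j, (C j)ᴴ * C j := by
    simp [Matrix.conjTranspose_sum, Matrix.conjTranspose_mul]
  ext1 X
  simp only [lindblad, lyapunovMap, lindbladDrift, lindbladJump, Matrix.conjTranspose_sub,
    Matrix.conjTranspose_smul, hH, hsum, LinearMap.add_apply, LinearMap.smul_apply,
    LinearMap.sub_apply, LinearMap.coe_sum, Finset.sum_apply, LinearMap.comp_apply,
    LinearMap.mulLeft_apply, LinearMap.mulRight_apply, Matrix.sub_mul, Matrix.mul_sub,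
    Matrix.smul_mul, Matrix.mul_smul, Finset.sum_mul, Finset.mul_sum, Finset.sum_sub_distrib,
    smul_add, smul_sub, Finset.sum_add_distrib, ← Finset.smul_sum]
  simp only [star_neg, Complex.star_def, Complex.conj_I, neg_neg, star_div₀, star_one,
    star_ofNat]
  module

theorem isPositiveMap_expMap_lindblad [Nonempty (Fin d)] {m : ℕ} {H : Mat d} (hH : Hᴴ = H)
    (C : Fin m → Mat d) {t : ℝ} (ht : 0 ≤ t) : IsPositiveMap (expMap ((t : ℂ) • lindblad H C)) := by
  rw [lindblad_eq_lyapunovMap_add hH]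
  refine IsPositiveMap.expMap_smul_add (fun s _ => ?_) (fun s hs => ?_) ht
  · rw [ofReal_smul_lyapunovMap]
    exact isPositiveMap_expMap_lyapunovMap _
  · exact (isPositiveMap_lindbladJump C).expMap_smul hs

lemma trace_lindblad {m : ℕ} (H : Mat d) (C : Fin m → Mat d) (X : Mat d) :
    (lindblad H C X).trace = 0 := by
  simp only [lindblad, LinearMap.add_apply, LinearMap.smul_apply, LinearMap.sub_apply,
    LinearMap.coe_sum, Finset.sum_apply, LinearMap.comp_apply, LinearMap.mulLeft_apply,
    LinearMap.mulRight_apply, Matrix.trace_add, Matrix.trace_smul, Matrix.trace_sub,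
    Matrix.trace_sum, Matrix.trace_mul_comm H X, sub_self, smul_zero, zero_add]
  refine Finset.sum_eq_zero fun j _ => ?_
  rw [← mul_assoc, Matrix.trace_mul_cycle (C j) X (C j)ᴴ, Matrix.trace_mul_comm X ((C j)ᴴ * C j)]
  ring

theorem stmt7_general {d m : ℕ} (hd : 1 ≤ d) (H : Mat d) (hH : Hᴴ = H) (C : Fin (m + 1) → Mat d)
    (Ps : Mat d) (hPs : Psᴴ = Ps) :
    ∀ t : ℝ, 0 ≤ t →
      (∀ X : Mat d, X.PosSemidef → (expMap ((t : ℂ) • lindbladS H C Ps) X).PosSemidef) ∧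
      (∀ X : Mat d, (expMap ((t : ℂ) • lindbladS H C Ps) X).trace = X.trace) := by
  intro t ht
  have : Nonempty (Fin d) := ⟨⟨0, hd⟩⟩
  have hHS : (Ps * H * Ps)ᴴ = Ps * H * Ps := by
    rw [Matrix.conjTranspose_mul, Matrix.conjTranspose_mul, hPs, hH, mul_assoc]
  refine ⟨isPositiveMap_expMap_lindblad hHS _ ht, trace_expMap_apply fun Y => ?_⟩
  rw [LinearMap.smul_apply, Matrix.trace_smul, lindbladS, trace_lindblad, smul_zero]

/-- `exp(tL_S)` is a positive, trace preserving map for every `t ≥ 0`. -/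
theorem stmt7 {d m : ℕ} (hd : 1 ≤ d) (H : Mat d) (hH : Hᴴ = H) (C : Fin (m + 1) → Mat d)
    (Ps : Mat d) (hPs : Psᴴ = Ps) (hPs2 : Ps * Ps = Ps) :
    ∀ t : ℝ, 0 ≤ t →
      (∀ X : Mat d, X.PosSemidef → (expMap ((t : ℂ) • lindbladS H C Ps) X).PosSemidef) ∧
      (∀ X : Mat d, (expMap ((t : ℂ) • lindbladS H C Ps) X).trace = X.trace) :=
  stmt7_general hd H hH C Ps hPs
end
end

section
/- Assume the invariance block condition. Then for every state ρ₀ and every t ≥ 0 one has P_R exp(tL)(ρ₀) P_R = exp(tL_R)(P_R ρ₀ P_R). -/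
open scoped ComplexOrder Matrix Matrix.Norms.L2Operator

noncomputable section

/-!
Write `D = i P_S H P_R - ½ Σⱼ C_{j,S}* C_{j,P}`. If `P_R Cⱼ P_S = 0`, compressing the Lindblad
generator to the `R` block gives `P_R L(X) P_R = L_R(P_R X P_R) + D* X P_R + P_R X D`, so under the
invariance block condition (`D = 0`) the compression `X ↦ P_R X P_R` intertwines `L` with `L_R`.
An intertwining relation between two generators passes to their exponentials, term by term in the
power series.
-/

def invarianceDefect {d m : ℕ} (H : Mat d) (C : Fin m → Mat d) (Ps : Mat d) : Mat d :=
  Complex.I • (Ps * H * (1 - Ps)) - (1/2 : ℂ) • ∑ j, (Ps * C j * Ps)ᴴ * (Ps * C j * (1 - Ps))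

section Compression

variable {d m : ℕ} {H : Mat d} {C : Fin m → Mat d} {Ps : Mat d}

theorem conjTranspose_invarianceDefect (hH : Hᴴ = H) (hPs : Psᴴ = Ps) :
    (invarianceDefect H C Ps)ᴴ = (-Complex.I) • ((1 - Ps) * H * Ps)
      - (1/2 : ℂ) • ∑ j, (Ps * C j * (1 - Ps))ᴴ * (Ps * C j * Ps) := by
  simp [invarianceDefect, Matrix.conjTranspose_sum, hH, hPs, mul_assoc, neg_smul]

/-- `P_R Cⱼ P_S = 0` gives `P_R Cⱼ = P_R Cⱼ P_R` and `Cⱼ* P_R = P_R Cⱼ* P_R`, which kill every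
cross term except those assembling into `D` and `D*`. -/
theorem one_sub_mul_lindblad_mul_one_sub (hH : Hᴴ = H) (hPs : Psᴴ = Ps)
    (hPs2 : IsIdempotentElem Ps) (hC : ∀ j, (1 - Ps) * C j * Ps = 0) (X : Mat d) :
    (1 - Ps) * lindblad H C X * (1 - Ps) = lindbladR H C Ps ((1 - Ps) * X * (1 - Ps))
      + (invarianceDefect H C Ps)ᴴ * (X * (1 - Ps))
      + ((1 - Ps) * X) * invarianceDefect H C Ps := by
  rw [conjTranspose_invarianceDefect hH hPs]
  set Q : Mat d := 1 - Ps with hQ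
  have hPsQ : Ps = 1 - Q := by rw [hQ, sub_sub_cancel]
  have hQh : Qᴴ = Q := by rw [hQ, Matrix.conjTranspose_sub, Matrix.conjTranspose_one, hPs]
  have hQQ : ∀ Y, Q * (Q * Y) = Q * Y := fun Y => by rw [← mul_assoc, hPs2.one_sub.eq]
  have hQCQ : ∀ j, Q * C j * Q = Q * C j := fun j => by
    rw [hQ, mul_sub (_ * _), mul_one, hC, sub_zero]
  have hQCsQ : ∀ j, Q * (C j)ᴴ * Q = (C j)ᴴ * Q := fun j => by
    simpa [hQh, mul_assoc] using congrArg Matrix.conjTranspose (hQCQ j)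
  -- the same two facts, right-associated to match the `mul_assoc` normal form used below
  have hQCQ' : ∀ j, Q * (C j * Q) = Q * C j := fun j => by simp only [← mul_assoc, hQCQ]
  have hQCQY : ∀ j Y, Q * (C j * (Q * Y)) = Q * (C j * Y) := fun j Y => by
    simp only [← mul_assoc, hQCQ]
  have hQCsQ' : ∀ j, Q * ((C j)ᴴ * Q) = (C j)ᴴ * Q := fun j => by simp only [← mul_assoc, hQCsQ]
  have hQCsQY : ∀ j Y, Q * ((C j)ᴴ * (Q * Y)) = (C j)ᴴ * (Q * Y) := fun j Y => by
    simp only [← mul_assoc, hQCsQ]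
  rw [lindbladR, lindblad, lindblad, invarianceDefect, hPsQ]
  simp only [LinearMap.add_apply, LinearMap.sub_apply, LinearMap.smul_apply,
    LinearMap.sum_apply, LinearMap.comp_apply, LinearMap.mulLeft_apply,
    LinearMap.mulRight_apply, Matrix.conjTranspose_mul, Matrix.conjTranspose_sub, hQh,
    mul_sub, sub_mul, mul_add, add_mul, mul_one, one_mul, smul_sub, smul_add,
    Finset.sum_mul, Finset.mul_sum, Finset.sum_add_distrib, Finset.sum_sub_distrib,
    smul_mul_assoc, mul_smul_comm, mul_assoc, hQQ, hQCQY, hQCQ', hQCsQY, hQCsQ', ← Finset.smul_sum]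
  module

theorem mulLeftRight_comp_lindblad (hH : Hᴴ = H) (hPs : Psᴴ = Ps) (hPs2 : IsIdempotentElem Ps)
    (hblock : BlockInv H C Ps) :
    LinearMap.mulLeftRight ℂ (1 - Ps, 1 - Ps) ∘ₗ lindblad H C
      = lindbladR H C Ps ∘ₗ LinearMap.mulLeftRight ℂ (1 - Ps, 1 - Ps) := by
  obtain ⟨hC, hD⟩ := hblock
  change invarianceDefect H C Ps = 0 at hD
  ext1 X
  simp [one_sub_mul_lindblad_mul_one_sub hH hPs hPs2 hC, hD]

end Compression

theorem expMap_comp_of_comp_eq {d : ℕ} {Φ f g : Mat d →ₗ[ℂ] Mat d} (h : Φ ∘ₗ f = g ∘ₗ Φ) :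
    Φ ∘ₗ expMap f = expMap g ∘ₗ Φ := by
  unfold expMap
  set b := Matrix.stdBasis ℂ (Fin d) (Fin d)
  -- `SemiconjBy.exp_right` is stated for `ℚ`-algebras.
  let _ : NormedAlgebra ℚ (Matrix (Fin d × Fin d) (Fin d × Fin d) ℂ) :=
    NormedAlgebra.restrictScalars ℚ ℂ _
  have hM : LinearMap.toMatrix b b Φ * LinearMap.toMatrix b b f
      = LinearMap.toMatrix b b g * LinearMap.toMatrix b b Φ := by
    simpa only [LinearMap.toMatrix_comp b b b] using congrArg (LinearMap.toMatrix b b) h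
  apply (LinearMap.toMatrix b b).injective
  simpa only [LinearMap.toMatrix_comp b b b, LinearMap.toMatrix_toLin]
    using (SemiconjBy.exp_right hM).eq

theorem stmt10_general {d m : ℕ} (H : Mat d) (hH : Hᴴ = H) (C : Fin (m + 1) → Mat d)
    (Ps : Mat d) (hPs : Psᴴ = Ps) (hPs2 : Ps * Ps = Ps)
    (hblock : BlockInv H C Ps) :
    ∀ ρ₀ : Mat d, IsState ρ₀ → ∀ t : ℝ, 0 ≤ t →
      ((1 : Mat d) - Ps) * expMap ((t : ℂ) • lindblad H C) ρ₀ * ((1 : Mat d) - Ps)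
        = expMap ((t : ℂ) • lindbladR H C Ps) (((1 : Mat d) - Ps) * ρ₀ * ((1 : Mat d) - Ps)) := by
  intro ρ₀ _ t _
  have h := mulLeftRight_comp_lindblad hH hPs hPs2 hblock
  have ht : LinearMap.mulLeftRight ℂ (1 - Ps, 1 - Ps) ∘ₗ ((t : ℂ) • lindblad H C)
      = ((t : ℂ) • lindbladR H C Ps) ∘ₗ LinearMap.mulLeftRight ℂ (1 - Ps, 1 - Ps) := by
    rw [LinearMap.comp_smul, LinearMap.smul_comp, h]
  simpa using LinearMap.congr_fun (expMap_comp_of_comp_eq ht) ρ₀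

/-- Under the invariance block condition, the `R` block of the mean evolution is
governed by `exp(tL_R)`: `P_R exp(tL)(ρ₀) P_R = exp(tL_R)(P_R ρ₀ P_R)`. -/
theorem stmt10 {d m : ℕ} (hd : 1 ≤ d) (H : Mat d) (hH : Hᴴ = H) (C : Fin (m + 1) → Mat d)
    (Ps : Mat d) (hPs : Psᴴ = Ps) (hPs2 : Ps * Ps = Ps)
    (hblock : BlockInv H C Ps) :
    ∀ ρ₀ : Mat d, IsState ρ₀ → ∀ t : ℝ, 0 ≤ t →
      ((1 : Mat d) - Ps) * expMap ((t : ℂ) • lindblad H C) ρ₀ * ((1 : Mat d) - Ps)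
        = expMap ((t : ℂ) • lindbladR H C Ps) (((1 : Mat d) - Ps) * ρ₀ * ((1 : Mat d) - Ps)) :=
  stmt10_general H hH C Ps hPs hPs2 hblock

end
end

section
/- Let ρ ∈ M_d(ℂ) be positive semidefinite with tr ρ = 1 and let P ∈ M_d(ℂ) be an orthogonal projection. Then ‖ρ − PρP‖ ≤ 3·√(tr((I − P)ρ)), where ‖·‖ denotes the operator norm on M_d(ℂ). -/
open scoped ComplexOrder Matrix Matrix.Norms.L2Operator

noncomputable section

/-!
Put `q = 1 - P`, so that `ρ - PρP = ρq + qρ - qρq`. With `s = √ρ` one has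
`‖ρq‖ ≤ ‖s‖ ‖sq‖`, `‖s‖² = ‖ρ‖` and `‖sq‖² = ‖qρq‖`; hence, once `‖ρ‖ ≤ 1`, each of the three
terms has norm at most `√‖qρq‖`. This is pure C⋆-algebra. The trace enters only through
`‖A‖ ≤ tr A` for `A ⪰ 0` (the norm is the largest eigenvalue), which gives `‖ρ‖ ≤ 1` and
`‖qρq‖ ≤ tr(qρq) = tr(qρ)`.
-/

section CStar

variable {A : Type*} [CStarAlgebra A] [PartialOrder A] [StarOrderedRing A]

lemma CStarAlgebra.norm_mul_sq_le_of_nonneg {a : A} (ha : 0 ≤ a) (x : A) :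
    ‖a * x‖ ^ 2 ≤ ‖a‖ * ‖star x * a * x‖ := by
  set s := CFC.sqrt a
  have hs : star s = s := (CFC.sqrt_nonneg a).isSelfAdjoint.star_eq
  have hss : s * s = a := CFC.sqrt_mul_sqrt_self a ha
  have hs_norm : ‖s‖ * ‖s‖ = ‖a‖ := by
    rw [← CStarRing.norm_star_mul_self, hs, hss]
  have hsx_norm : ‖s * x‖ * ‖s * x‖ = ‖star x * a * x‖ := by
    rw [← CStarRing.norm_star_mul_self, star_mul, hs, ← hss]
    simp only [mul_assoc]
  calc ‖a * x‖ ^ 2 = ‖s * (s * x)‖ ^ 2 := by rw [← mul_assoc, hss]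
    _ ≤ (‖s‖ * ‖s * x‖) ^ 2 := by gcongr; exact norm_mul_le _ _
    _ = ‖a‖ * ‖star x * a * x‖ := by rw [← hs_norm, ← hsx_norm]; ring

lemma IsStarProjection.norm_sub_mul_mul_le {a p : A} (hp : IsStarProjection p) (ha : 0 ≤ a)
    (ha_norm : ‖a‖ ≤ 1) :
    ‖a - p * a * p‖ ≤ 3 * √‖(1 - p) * a * (1 - p)‖ := by
  set q := 1 - p with hq_def
  have hq : IsStarProjection q := hp.one_sub
  have hq_star : star q = q := hq.isSelfAdjoint.star_eq
  have h_aq : ‖a * q‖ ≤ √‖q * a * q‖ := by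
    refine Real.le_sqrt_of_sq_le ?_
    calc ‖a * q‖ ^ 2 ≤ ‖a‖ * ‖star q * a * q‖ := CStarAlgebra.norm_mul_sq_le_of_nonneg ha q
      _ ≤ 1 * ‖q * a * q‖ := by rw [hq_star]; gcongr
      _ = ‖q * a * q‖ := one_mul _
  have h_qa : ‖q * a‖ = ‖a * q‖ := by
    rw [← norm_star (a * q), star_mul, hq_star, ha.isSelfAdjoint.star_eq]
  have h_qaq : ‖q * a * q‖ ≤ ‖a * q‖ := by
    calc ‖q * a * q‖ = ‖q * (a * q)‖ := by rw [mul_assoc]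
      _ ≤ ‖q‖ * ‖a * q‖ := norm_mul_le _ _
      _ ≤ 1 * ‖a * q‖ := by gcongr; exact hq.norm_le
      _ = ‖a * q‖ := one_mul _
  have h_decomp : a - p * a * p = a * q + q * a - q * a * q := by
    rw [hq_def]; noncomm_ring
  calc ‖a - p * a * p‖ ≤ ‖a * q‖ + ‖q * a‖ + ‖q * a * q‖ := by
        rw [h_decomp]; exact (norm_sub_le _ _).trans (by gcongr; exact norm_add_le _ _)
    _ ≤ 3 * ‖a * q‖ := by linarith
    _ ≤ 3 * √‖q * a * q‖ := by gcongr

end CStar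

open scoped MatrixOrder in
lemma Matrix.PosSemidef.l2_opNorm_le_re_trace {n : Type*} [Fintype n] [DecidableEq n]
    {A : Matrix n n ℂ} (hA : A.PosSemidef) : ‖A‖ ≤ A.trace.re := by
  rcases subsingleton_or_nontrivial (Matrix n n ℂ) with h | h
  · rw [Subsingleton.elim A 0, norm_zero, Matrix.trace_zero, Complex.zero_re]
  obtain ⟨i, hi⟩ : ‖A‖ ∈ Set.range hA.isHermitian.eigenvalues := by
    rw [← hA.isHermitian.spectrum_real_eq_range_eigenvalues]
    exact CStarAlgebra.norm_mem_spectrum_of_nonneg (nonneg_iff_posSemidef.mpr hA)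
  rw [← hi, hA.isHermitian.trace_eq_sum_eigenvalues, Complex.re_sum]
  simp only [Complex.coe_algebraMap, Complex.ofReal_re]
  exact Finset.single_le_sum (fun j _ => hA.eigenvalues_nonneg j) (Finset.mem_univ i)

theorem stmt18_general {d : ℕ} (ρ : Mat d) (hρ : ρ.PosSemidef) (htr : ρ.trace = 1)
    (P : Mat d) (hP : Pᴴ = P) (hP2 : P * P = P) :
    ‖ρ - P * ρ * P‖ ≤ 3 * Real.sqrt ((((1 : Mat d) - P) * ρ).trace).re := by
  have hP_proj : IsStarProjection P := ⟨hP2, hP⟩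
  have hQ : IsStarProjection (1 - P) := hP_proj.one_sub
  have hρ_norm : ‖ρ‖ ≤ 1 := by simpa [htr] using hρ.l2_opNorm_le_re_trace
  have hQρQ : ‖(1 - P) * ρ * (1 - P)‖ ≤ (((1 - P) * ρ).trace).re := by
    have h := (hρ.conjTranspose_mul_mul_same (1 - P)).l2_opNorm_le_re_trace
    rwa [Matrix.trace_mul_cycle, ← Matrix.star_eq_conjTranspose, hQ.isSelfAdjoint.star_eq,
      hQ.isIdempotentElem.eq] at h
  calc ‖ρ - P * ρ * P‖ ≤ 3 * √‖(1 - P) * ρ * (1 - P)‖ :=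
        open scoped MatrixOrder in
        hP_proj.norm_sub_mul_mul_le (Matrix.nonneg_iff_posSemidef.mpr hρ) hρ_norm
    _ ≤ _ := by gcongr

/-- For a state `ρ` and an orthogonal projection `P`,
`‖ρ - PρP‖ ≤ 3 √(tr((I - P)ρ))` in operator norm. -/
theorem stmt18 {d : ℕ} (hd : 1 ≤ d) (ρ : Mat d) (hρ : ρ.PosSemidef) (htr : ρ.trace = 1)
    (P : Mat d) (hP : Pᴴ = P) (hP2 : P * P = P) :
    ‖ρ - P * ρ * P‖ ≤ 3 * Real.sqrt ((((1 : Mat d) - P) * ρ).trace).re :=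
  stmt18_general ρ hρ htr P hP hP2

end
end

section
/- Let ℓ_S, ℓ_R ∈ ℂ, set C' = ℓ_S·P_S + ℓ_R·P_R, and define the linear map D(X) = C' X C'* − ½(C'*C' X + X C'*C'). Then: (i) D(X) = 0 for every X ∈ M_d(ℂ) with X = P_S X P_S, and D(X) = 0 for every X with X = P_R X P_R (so adding the measurement channel C' changes neither the S-restricted nor the R-restricted generator); (ii) for every state ρ with tr(P_S ρ) = 1 and every state ρ_R supported on H_R, one has ½·(tr[(C' + C'*)ρ] − tr[(P_R C' P_R + P_R C'* P_R)ρ_R])² = 2·(Re(ℓ_S − ℓ_R))²; consequently, the quantity α₁ for the channel family augmented by the extra diffusive channel C' equals α₁ + 2·(Re(ℓ_S − ℓ_R))². -/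
open scoped ComplexOrder Matrix Matrix.Norms.L2Operator

noncomputable section

/-! On each block `C' = ℓ_S P_S + ℓ_R P_R` acts as a scalar, so on `X = P X P` the dissipator is
`(|ℓ|² - ½ · 2|ℓ|²) X = 0`. For the same reason `tr[(C' + C'*) ρ] = 2 Re ℓ_S` whenever
`tr(P_S ρ) = 1`, and `P_R C' P_R = ℓ_R P_R` gives `2 Re ℓ_R` against every `ρ_R`: the added term of
`α` is the constant `2 (Re(ℓ_S - ℓ_R))²`, which shifts the infimum. Shifting an infimum needs the
admissible set to be nonempty (take `P / tr P`) and `α` bounded below: each jump term is at least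
`-v_j(ρ) ≥ -‖C_j* C_j‖`. -/

section Idempotent

variable {R : Type*}

lemma IsIdempotentElem.mul_eq_of_mul_mul_eq [Semigroup R] {P X : R} (hP : IsIdempotentElem P)
    (hX : P * X * P = X) : P * X = X := by
  rw [← hX, ← mul_assoc, ← mul_assoc, hP.eq]

lemma IsIdempotentElem.mul_eq_of_mul_mul_eq' [Semigroup R] {P X : R} (hP : IsIdempotentElem P)
    (hX : P * X * P = X) : X * P = X := by
  rw [← hX, mul_assoc, hP.eq]

lemma IsIdempotentElem.one_sub_mul_eq_zero_of_mul_mul_eq [Ring R] {P X : R}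
    (hP : IsIdempotentElem P) (hX : P * X * P = X) : (1 - P) * X = 0 := by
  rw [sub_mul, one_mul, hP.mul_eq_of_mul_mul_eq hX, sub_self]

lemma IsIdempotentElem.mul_one_sub_eq_zero_of_mul_mul_eq [Ring R] {P X : R}
    (hP : IsIdempotentElem P) (hX : P * X * P = X) : X * (1 - P) = 0 := by
  rw [mul_sub, mul_one, hP.mul_eq_of_mul_mul_eq' hX, sub_self]

end Idempotent

lemma conjTranspose_smul_add_smul_one_sub {n : Type*} [DecidableEq n] {P : Matrix n n ℂ}
    (hP : Pᴴ = P) (a b : ℂ) : (a • P + b • (1 - P))ᴴ = star a • P + star b • (1 - P) := by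
  simp [Matrix.conjTranspose_sub, hP]

section BlockScalar

variable {n : Type*} [Fintype n] [DecidableEq n] {P X : Matrix n n ℂ}

lemma IsIdempotentElem.smul_add_smul_one_sub_mul_of_mul_mul_eq (hP : IsIdempotentElem P)
    (hX : P * X * P = X) (a b : ℂ) : (a • P + b • (1 - P)) * X = a • X := by
  rw [add_mul, Matrix.smul_mul, Matrix.smul_mul, hP.mul_eq_of_mul_mul_eq hX,
    hP.one_sub_mul_eq_zero_of_mul_mul_eq hX, smul_zero, add_zero]

lemma IsIdempotentElem.mul_smul_add_smul_one_sub_of_mul_mul_eq (hP : IsIdempotentElem P)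
    (hX : P * X * P = X) (a b : ℂ) : X * (a • P + b • (1 - P)) = a • X := by
  rw [mul_add, Matrix.mul_smul, Matrix.mul_smul, hP.mul_eq_of_mul_mul_eq' hX,
    hP.mul_one_sub_eq_zero_of_mul_mul_eq hX, smul_zero, add_zero]

lemma IsIdempotentElem.one_sub_mul_smul_add_smul_one_sub_mul_one_sub (hP : IsIdempotentElem P)
    (a b : ℂ) : (1 - P) * (a • P + b • (1 - P)) * (1 - P) = b • (1 - P) := by
  rw [mul_add, add_mul, Matrix.mul_smul, Matrix.mul_smul, Matrix.smul_mul, Matrix.smul_mul,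
    hP.one_sub_mul_self, hP.one_sub.eq, hP.one_sub.eq, zero_mul, smul_zero, zero_add]

end BlockScalar

lemma lindblad_zero_single_apply {d : ℕ} (A X : Mat d) :
    lindblad (0 : Mat d) (fun _ : Fin 1 => A) X
      = A * X * Aᴴ - (1/2 : ℂ) • ((Aᴴ * A) * X + X * (Aᴴ * A)) := by
  simp [lindblad, LinearMap.mulLeft_apply, LinearMap.mulRight_apply, mul_assoc]

lemma lindblad_zero_single_eq_zero_of_eigen {d : ℕ} {A X : Mat d} {μ : ℂ}
    (hAX : A * X = μ • X) (hAhX : Aᴴ * X = star μ • X)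
    (hXA : X * A = μ • X) (hXAh : X * Aᴴ = star μ • X) :
    lindblad (0 : Mat d) (fun _ : Fin 1 => A) X = 0 := by
  rw [lindblad_zero_single_apply, hAX, Matrix.smul_mul, hXAh, mul_assoc, hAX, Matrix.mul_smul,
    hAhX, ← mul_assoc, hXAh, Matrix.smul_mul, hXA, smul_smul, smul_smul, ← add_smul,
    smul_smul, ← sub_smul, mul_comm (star μ),
    show μ * star μ - 1 / 2 * (μ * star μ + μ * star μ) = 0 by ring, zero_smul]

lemma lindblad_zero_smul_add_smul_one_sub_eq_zero {d : ℕ} {P X : Mat d} (hPh : Pᴴ = P)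
    (hP : IsIdempotentElem P) (hX : P * X * P = X) (a b : ℂ) :
    lindblad (0 : Mat d) (fun _ : Fin 1 => a • P + b • (1 - P)) X = 0 :=
  lindblad_zero_single_eq_zero_of_eigen (hP.smul_add_smul_one_sub_mul_of_mul_mul_eq hX a b)
    (by rw [conjTranspose_smul_add_smul_one_sub hPh,
      hP.smul_add_smul_one_sub_mul_of_mul_mul_eq hX])
    (hP.mul_smul_add_smul_one_sub_of_mul_mul_eq hX a b)
    (by rw [conjTranspose_smul_add_smul_one_sub hPh,
      hP.mul_smul_add_smul_one_sub_of_mul_mul_eq hX])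

section Record

variable {n : Type*} [Fintype n]

lemma re_trace_smul_add_conjTranspose_mul {Q : Matrix n n ℂ} (hQ : Qᴴ = Q) (b : ℂ)
    (ρ : Matrix n n ℂ) : ((b • Q + (b • Q)ᴴ) * ρ).trace.re = 2 * b.re * (Q * ρ).trace.re := by
  rw [Matrix.conjTranspose_smul, hQ, ← add_smul, Matrix.smul_mul, Matrix.trace_smul, smul_eq_mul,
    Complex.star_def, Complex.add_conj, Complex.re_ofReal_mul]

lemma re_trace_smul_add_smul_one_sub_add_conjTranspose_mul [DecidableEq n] {P : Matrix n n ℂ}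
    (hP : Pᴴ = P) (a b : ℂ) (ρ : Matrix n n ℂ) :
    (((a • P + b • (1 - P)) + (a • P + b • (1 - P))ᴴ) * ρ).trace.re
      = 2 * a.re * (P * ρ).trace.re + 2 * b.re * ((1 - P) * ρ).trace.re := by
  rw [← re_trace_smul_add_conjTranspose_mul hP,
    ← re_trace_smul_add_conjTranspose_mul (Matrix.isHermitian_one.sub hP),
    ← Complex.add_re, ← Matrix.trace_add, ← add_mul, Matrix.conjTranspose_add]
  abel_nf

end Record

lemma half_sq_re_trace_record_sub_eq {d : ℕ} {P : Mat d} (hPh : Pᴴ = P) (hP : IsIdempotentElem P)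
    (a b : ℂ) {ρ ρR : Mat d} (hρ : IsState ρ) (hρP : (P * ρ).trace = 1) (hρR : IsState ρR)
    (hρRsupp : (1 - P) * ρR * (1 - P) = ρR) :
    (1/2) * (((((a • P + b • (1 - P)) + (a • P + b • (1 - P))ᴴ) * ρ).trace).re
        - (((1 - P) * (a • P + b • (1 - P)) * (1 - P)
            + (1 - P) * (a • P + b • (1 - P))ᴴ * (1 - P)) * ρR).trace.re) ^ 2
      = 2 * ((a - b).re) ^ 2 := by
  have hQh : (1 - P)ᴴ = 1 - P := Matrix.isHermitian_one.sub hPh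
  have hρQ : ((1 - P) * ρ).trace = 0 := by
    rw [sub_mul, one_mul, Matrix.trace_sub, hρ.2, hρP, sub_self]
  have hρRQ : ((1 - P) * ρR).trace = 1 := by
    rw [hP.one_sub.mul_eq_of_mul_mul_eq hρRsupp, hρR.2]
  have hcompress : (1 - P) * (a • P + b • (1 - P)) * (1 - P)
      + (1 - P) * (a • P + b • (1 - P))ᴴ * (1 - P) = b • (1 - P) + (b • (1 - P))ᴴ := by
    rw [conjTranspose_smul_add_smul_one_sub hPh, hP.one_sub_mul_smul_add_smul_one_sub_mul_one_sub,
      hP.one_sub_mul_smul_add_smul_one_sub_mul_one_sub, Matrix.conjTranspose_smul, hQh]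
  rw [hcompress, re_trace_smul_add_conjTranspose_mul hQh,
    re_trace_smul_add_smul_one_sub_add_conjTranspose_mul hPh, hρP, hρQ, hρRQ]
  simp only [Complex.one_re, Complex.zero_re, Complex.sub_re]
  ring

open scoped MatrixOrder in
lemma re_trace_mul_le_norm {n : Type*} [Fintype n] [DecidableEq n] {ρ B : Matrix n n ℂ}
    (hρ : ρ.PosSemidef) (htr : ρ.trace = 1) (hB : IsSelfAdjoint B) : (B * ρ).trace.re ≤ ‖B‖ := by
  obtain ⟨X, rfl⟩ := CStarAlgebra.nonneg_iff_eq_star_mul_self.mp hρ.nonneg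
  have hle : star (star X) * B * star X ≤ star (star X) * algebraMap ℝ _ ‖B‖ * star X :=
    star_left_conjugate_le_conjugate hB.le_algebraMap_norm_self _
  have htr_le := (Matrix.nonneg_iff_posSemidef.mp (sub_nonneg.mpr hle)).trace_nonneg
  rw [star_star, Matrix.trace_sub, sub_nonneg, Matrix.trace_mul_cycle, ← Matrix.trace_mul_cycle]
    at htr_le
  simp only [Algebra.algebraMap_eq_smul_one, Matrix.mul_smul, Matrix.smul_mul, mul_one,
    Matrix.trace_smul] at htr_le
  rw [Matrix.trace_mul_cycle, Matrix.trace_mul_comm X, htr, ← Matrix.trace_mul_comm] at htr_le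
  simpa using (Complex.le_def.mp htr_le).1

lemma exists_isState_mul_mul_eq {d : ℕ} {P : Mat d} (hPh : Pᴴ = P) (hP : IsIdempotentElem P)
    (hP0 : P ≠ 0) : ∃ ρ : Mat d, IsState ρ ∧ P * ρ * P = ρ := by
  have hpsd : P.PosSemidef := by
    simpa [hPh, hP.eq] using Matrix.posSemidef_conjTranspose_mul_self P
  have hpos : 0 < P.trace :=
    hpsd.trace_nonneg.lt_of_ne fun h => hP0 (hpsd.trace_eq_zero_iff.mp h.symm)
  set t := P.trace.re
  have htr : P.trace = t := Complex.eq_re_of_ofReal_le (r := 0) (by exact_mod_cast hpos.le)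
  have ht : 0 < t := (Complex.pos_iff.mp hpos).1
  refine ⟨t⁻¹ • P, ⟨hpsd.smul (inv_nonneg.mpr ht.le), ?_⟩, ?_⟩
  · rw [Matrix.trace_smul, htr, Complex.real_smul, ← Complex.ofReal_mul, inv_mul_cancel₀ ht.ne',
      Complex.ofReal_one]
  · rw [Matrix.mul_smul, Matrix.smul_mul, hP.eq, hP.eq]

-- At `w = 0` the junk value `Real.log (v / 0) = 0` leaves exactly `-v`.
lemma jump_term_ge_neg {v w : ℝ} (hv : 0 ≤ v) (hw : 0 ≤ w) :
    -v ≤ w - v + v * Real.log (v / w) := by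
  rcases hv.eq_or_lt with rfl | hv
  · simpa using hw
  rcases hw.eq_or_lt with rfl | hw
  · simp
  have := Real.one_sub_inv_le_log_of_pos (div_pos hv hw)
  rw [inv_div] at this
  have := mul_le_mul_of_nonneg_left this hv.le
  rw [mul_sub, mul_one, mul_div_cancel₀ _ hv.ne'] at this
  linarith

lemma re_trace_conjTranspose_mul_self_mul_nonneg {n : Type*} [Fintype n] {ρ : Matrix n n ℂ}
    (hρ : ρ.PosSemidef) (B : Matrix n n ℂ) : 0 ≤ (Bᴴ * B * ρ).trace.re := by
  rw [Matrix.mul_assoc, Matrix.trace_mul_comm]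
  exact (Complex.nonneg_iff.mp (hρ.mul_mul_conjTranspose_same B).trace_nonneg).1

lemma vVal_eq_re_trace_conjTranspose_mul_self_mul {d m : ℕ} (C : Fin m → Mat d) (j : Fin m)
    (ρ : Mat d) :
    vVal C j ρ = ((C j)ᴴ * C j * ρ).trace.re := by
  rw [vVal, Matrix.trace_mul_cycle]

lemma neg_sum_norm_le_alphaFun {d m : ℕ} (C : Fin m → Mat d) (p : ℕ) (Ps : Mat d) {ρ ρR : Mat d}
    (hρ : IsState ρ) (hρR : ρR.PosSemidef) :
    -∑ j, ‖(C j)ᴴ * C j‖ ≤ alphaFun C p Ps ρ ρR := by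
  have hjump : ∀ j, -‖(C j)ᴴ * C j‖ ≤ vValR C Ps j ρR - vVal C j ρ
      + vVal C j ρ * Real.log (vVal C j ρ / vValR C Ps j ρR) := fun j =>
    calc -‖(C j)ᴴ * C j‖ ≤ -vVal C j ρ := by
          rw [vVal_eq_re_trace_conjTranspose_mul_self_mul, neg_le_neg_iff]
          exact re_trace_mul_le_norm hρ.1 hρ.2 (IsSelfAdjoint.star_mul_self (C j))
      _ ≤ _ := jump_term_ge_neg
          (vVal_eq_re_trace_conjTranspose_mul_self_mul C j ρ ▸
            re_trace_conjTranspose_mul_self_mul_nonneg hρ.1 _)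
          (re_trace_conjTranspose_mul_self_mul_nonneg hρR _)
  have hdiff : 0 ≤ (1/2 : ℝ) * ∑ j ∈ Finset.filter (fun j : Fin m => (j : ℕ) < p) Finset.univ,
      (rVal C j ρ - rValR C Ps j ρR) ^ 2 := by positivity
  calc -∑ j, ‖(C j)ᴴ * C j‖
      ≤ -∑ j ∈ Finset.filter (fun j : Fin m => p ≤ (j : ℕ)) Finset.univ, ‖(C j)ᴴ * C j‖ :=
        neg_le_neg (Finset.sum_le_sum_of_subset_of_nonneg (Finset.filter_subset _ _)
          fun _ _ _ => norm_nonneg _)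
    _ ≤ _ := by
        rw [← Finset.sum_neg_distrib]
        exact (Finset.sum_le_sum fun j _ => hjump j).trans (by unfold alphaFun; linarith)

lemma csInf_image_add_const {S : Set ℝ} (hne : S.Nonempty) (hbdd : BddBelow S) (c : ℝ) :
    sInf ((· + c) '' S) = sInf S + c :=
  ((OrderIso.addRight c).map_csInf' hne hbdd).symm

lemma sInf_alphaFun_add_eq {d m : ℕ} (C : Fin m → Mat d) (p : ℕ) {Ps : Mat d} (hPh : Psᴴ = Ps)
    (hP : IsIdempotentElem Ps) (hPs0 : Ps ≠ 0) (hPr0 : 1 - Ps ≠ 0) {g : Mat d → Mat d → ℝ}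
    {c : ℝ} (hg : ∀ ρ ρR : Mat d, IsState ρ → (Ps * ρ).trace = 1 → IsState ρR →
      (1 - Ps) * ρR * (1 - Ps) = ρR → g ρ ρR = c) :
    sInf {a : ℝ | ∃ ρ ρR : Mat d, IsState ρ ∧ (Ps * ρ).trace = 1 ∧ IsState ρR ∧
      (1 - Ps) * ρR * (1 - Ps) = ρR ∧ a = alphaFun C p Ps ρ ρR + g ρ ρR}
      = alpha1 C p Ps + c := by
  set A := {a : ℝ | ∃ ρ ρR : Mat d, IsState ρ ∧ (Ps * ρ).trace = 1 ∧ IsState ρR ∧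
    (1 - Ps) * ρR * (1 - Ps) = ρR ∧ a = alphaFun C p Ps ρ ρR}
  have hshift : {a : ℝ | ∃ ρ ρR : Mat d, IsState ρ ∧ (Ps * ρ).trace = 1 ∧ IsState ρR ∧
      (1 - Ps) * ρR * (1 - Ps) = ρR ∧ a = alphaFun C p Ps ρ ρR + g ρ ρR} = (· + c) '' A := by
    ext a
    constructor
    · rintro ⟨ρ, ρR, hρ, hρS, hρR, hρRR, rfl⟩
      exact ⟨_, ⟨ρ, ρR, hρ, hρS, hρR, hρRR, rfl⟩, by rw [hg ρ ρR hρ hρS hρR hρRR]⟩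
    · rintro ⟨_, ⟨ρ, ρR, hρ, hρS, hρR, hρRR, rfl⟩, rfl⟩
      exact ⟨ρ, ρR, hρ, hρS, hρR, hρRR, by rw [hg ρ ρR hρ hρS hρR hρRR]⟩
  obtain ⟨ρ, hρ, hρS⟩ := exists_isState_mul_mul_eq hPh hP hPs0
  obtain ⟨ρR, hρR, hρRR⟩ :=
    exists_isState_mul_mul_eq (Matrix.isHermitian_one.sub hPh) hP.one_sub hPr0
  have hne : A.Nonempty :=
    ⟨_, ρ, ρR, hρ, by rw [hP.mul_eq_of_mul_mul_eq hρS, hρ.2], hρR, hρRR, rfl⟩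
  have hbdd : BddBelow A := by
    refine ⟨-∑ j, ‖(C j)ᴴ * C j‖, ?_⟩
    rintro _ ⟨ρ, ρR, hρ, -, hρR, -, rfl⟩
    exact neg_sum_norm_le_alphaFun C p Ps hρ hρR.1
  rw [hshift, alpha1]
  exact csInf_image_add_const hne hbdd c

theorem stmt19_general {d m : ℕ} (C : Fin m → Mat d) (p : ℕ)
    (Ps : Mat d) (hPs : Psᴴ = Ps) (hPs2 : Ps * Ps = Ps)
    (hPsne : Ps ≠ 0) (hPr : (1 : Mat d) - Ps ≠ 0)
    (lS lR : ℂ) (C' : Mat d) (hC' : C' = lS • Ps + lR • ((1 : Mat d) - Ps)) :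
    (∀ X : Mat d, Ps * X * Ps = X →
        lindblad (0 : Mat d) (fun _ : Fin 1 => C') X = 0) ∧
    (∀ X : Mat d, ((1 : Mat d) - Ps) * X * ((1 : Mat d) - Ps) = X →
        lindblad (0 : Mat d) (fun _ : Fin 1 => C') X = 0) ∧
    (∀ ρ ρR : Mat d, IsState ρ → (Ps * ρ).trace = 1 → IsState ρR →
        ((1 : Mat d) - Ps) * ρR * ((1 : Mat d) - Ps) = ρR →
        (1/2) * ((((C' + C'ᴴ) * ρ).trace).re
            - ((((1 : Mat d) - Ps) * C' * ((1 : Mat d) - Ps)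
                + ((1 : Mat d) - Ps) * C'ᴴ * ((1 : Mat d) - Ps)) * ρR).trace.re) ^ 2
          = 2 * ((lS - lR).re) ^ 2) ∧
    sInf {a : ℝ | ∃ ρ ρR : Mat d, IsState ρ ∧ (Ps * ρ).trace = 1 ∧ IsState ρR ∧
        ((1 : Mat d) - Ps) * ρR * ((1 : Mat d) - Ps) = ρR ∧
        a = alphaFun C p Ps ρ ρR
          + (1/2) * ((((C' + C'ᴴ) * ρ).trace).re
            - ((((1 : Mat d) - Ps) * C' * ((1 : Mat d) - Ps)
                + ((1 : Mat d) - Ps) * C'ᴴ * ((1 : Mat d) - Ps)) * ρR).trace.re) ^ 2}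
      = alpha1 C p Ps + 2 * ((lS - lR).re) ^ 2 := by
  subst hC'
  have hP : IsIdempotentElem Ps := hPs2
  have hrecord := fun ρ ρR (hρ : IsState ρ) hρS (hρR : IsState ρR) hρRR =>
    half_sq_re_trace_record_sub_eq hPs hP lS lR hρ hρS hρR hρRR
  refine ⟨fun X hX => lindblad_zero_smul_add_smul_one_sub_eq_zero hPs hP hX lS lR,
    fun X hX => ?_, hrecord, sInf_alphaFun_add_eq C p hPs hP hPsne hPr hrecord⟩
  have hR := lindblad_zero_smul_add_smul_one_sub_eq_zero (Matrix.isHermitian_one.sub hPs)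
    hP.one_sub hX lR lS
  rwa [sub_sub_cancel, add_comm] at hR

/-- Adding the diffusive channel `C' = ℓ_S P_S + ℓ_R P_R` changes neither the
`S`- nor the `R`-restricted generator, its contribution to `α` is the constant
`2 (Re(ℓ_S - ℓ_R))²`, and consequently the augmented `α₁` equals `α₁ + 2 (Re(ℓ_S - ℓ_R))²`. -/
theorem stmt19 {d m : ℕ} (hd : 1 ≤ d) (C : Fin m → Mat d) (p : ℕ) (hp : p ≤ m)
    (Ps : Mat d) (hPs : Psᴴ = Ps) (hPs2 : Ps * Ps = Ps)
    (hPsne : Ps ≠ 0) (hPr : (1 : Mat d) - Ps ≠ 0)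
    (lS lR : ℂ) (C' : Mat d) (hC' : C' = lS • Ps + lR • ((1 : Mat d) - Ps)) :
    (∀ X : Mat d, Ps * X * Ps = X →
        lindblad (0 : Mat d) (fun _ : Fin 1 => C') X = 0) ∧
    (∀ X : Mat d, ((1 : Mat d) - Ps) * X * ((1 : Mat d) - Ps) = X →
        lindblad (0 : Mat d) (fun _ : Fin 1 => C') X = 0) ∧
    (∀ ρ ρR : Mat d, IsState ρ → (Ps * ρ).trace = 1 → IsState ρR →
        ((1 : Mat d) - Ps) * ρR * ((1 : Mat d) - Ps) = ρR →
        (1/2) * ((((C' + C'ᴴ) * ρ).trace).re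
            - ((((1 : Mat d) - Ps) * C' * ((1 : Mat d) - Ps)
                + ((1 : Mat d) - Ps) * C'ᴴ * ((1 : Mat d) - Ps)) * ρR).trace.re) ^ 2
          = 2 * ((lS - lR).re) ^ 2) ∧
    sInf {a : ℝ | ∃ ρ ρR : Mat d, IsState ρ ∧ (Ps * ρ).trace = 1 ∧ IsState ρR ∧
        ((1 : Mat d) - Ps) * ρR * ((1 : Mat d) - Ps) = ρR ∧
        a = alphaFun C p Ps ρ ρR
          + (1/2) * ((((C' + C'ᴴ) * ρ).trace).re
            - ((((1 : Mat d) - Ps) * C' * ((1 : Mat d) - Ps)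
                + ((1 : Mat d) - Ps) * C'ᴴ * ((1 : Mat d) - Ps)) * ρR).trace.re) ^ 2}
      = alpha1 C p Ps + 2 * ((lS - lR).re) ^ 2 :=
  stmt19_general C p Ps hPs hPs2 hPsne hPr lS lR C' hC'
end
end
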